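/- Let E and F be Banach spaces and T : E → F a bounded linear operator. Let 𝔍_F : F → ℓ∞(B_{F*}) be the canonical isometric embedding given by 𝔍_F(y) = (⟨y*, y⟩)_{y* ∈ B_{F*}}, and let 𝔔_E : ℓ1(B_E) → E be the canonical surjection given by (a_x)_{x ∈ B_E} ↦ Σ_{x ∈ B_E} a_x x. Then for every ordinal γ: Sz(𝔍_F ∘ T) ≤ γ if and only if Sz(T) ≤ γ; and if Sz(T ∘ 𝔔_E) ≤ γ then Sz(T) ≤ γ. -/

import Mathlib

open NormedSpace Metric
open scoped Ordinal Pointwise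

noncomputable section

/-- A subset of the norm dual is weak-* open if it is open when transported to the weak-* dual. -/
def IsWeakStarOpen {E : Type*} [NormedAddCommGroup E] [NormedSpace ℝ E]
    (V : Set (StrongDual ℝ E)) : Prop :=
  IsOpen (StrongDual.toWeakDual '' V : Set (WeakDual ℝ E))

/-- A subset of the norm dual is weak-* compact if it is compact when transported to the
weak-* dual. -/
def IsWeakStarCompact {E : Type*} [NormedAddCommGroup E] [NormedSpace ℝ E]
    (K : Set (StrongDual ℝ E)) : Prop :=
  IsCompact (StrongDual.toWeakDual '' K : Set (WeakDual ℝ E))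

/-- The Szlenk derivation `s_ε(K)`. -/
def szlenkDeriv {E : Type*} [NormedAddCommGroup E] [NormedSpace ℝ E]
    (ε : ℝ) (K : Set (StrongDual ℝ E)) : Set (StrongDual ℝ E) :=
  {x | x ∈ K ∧ ∀ V : Set (StrongDual ℝ E), IsWeakStarOpen V → x ∈ V → ε < Metric.diam (K ∩ V)}

/-- The transfinite iterates `s_ε^α(K)` of the Szlenk derivation. -/
noncomputable def szlenkIter {E : Type*} [NormedAddCommGroup E] [NormedSpace ℝ E]
    (ε : ℝ) (K : Set (StrongDual ℝ E)) (α : Ordinal) : Set (StrongDual ℝ E) :=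
  Ordinal.limitRecOn α K (fun _ S => szlenkDeriv ε S)
    (fun o _ ih => ⋂ (β : Ordinal) (h : β < o), ih β h)

/-- `Sz(K) ≤ γ` : the `γ`-th Szlenk derivative of `K` is empty for every `ε > 0`. -/
def SzLE {E : Type*} [NormedAddCommGroup E] [NormedSpace ℝ E]
    (K : Set (StrongDual ℝ E)) (γ : Ordinal) : Prop :=
  ∀ ε : ℝ, 0 < ε → szlenkIter ε K γ = ∅

/-- The image of a set under the adjoint of an operator. -/
def adjImage {E F : Type*} [NormedAddCommGroup E] [NormedSpace ℝ E]
    [NormedAddCommGroup F] [NormedSpace ℝ F] (T : E →L[ℝ] F) (K : Set (StrongDual ℝ F)) :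
    Set (StrongDual ℝ E) :=
  (fun g : StrongDual ℝ F => g.comp T) '' K

/-- `Sz(T) ≤ γ` for an operator `T`. -/
def SzOpLE {E F : Type*} [NormedAddCommGroup E] [NormedSpace ℝ E]
    [NormedAddCommGroup F] [NormedSpace ℝ F] (T : E →L[ℝ] F) (γ : Ordinal) : Prop :=
  SzLE (adjImage T (closedBall (0 : StrongDual ℝ F) 1)) γ

/-- `Sz(E) ≤ γ` for a Banach space `E`. -/
def SzSpaceLE (E : Type*) [NormedAddCommGroup E] [NormedSpace ℝ E] (γ : Ordinal) : Prop :=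
  SzLE (closedBall (0 : StrongDual ℝ E) 1) γ

section Aux
variable {X Y : Type*} [NormedAddCommGroup X] [NormedSpace ℝ X]
  [NormedAddCommGroup Y] [NormedSpace ℝ Y]

lemma szlenkIter_zero (ε : ℝ) (K : Set (StrongDual ℝ X)) : szlenkIter ε K 0 = K :=
  Ordinal.limitRecOn_zero ..

lemma szlenkIter_succ (ε : ℝ) (K : Set (StrongDual ℝ X)) (α : Ordinal) :
    szlenkIter ε K (Order.succ α) = szlenkDeriv ε (szlenkIter ε K α) :=
  Ordinal.limitRecOn_succ ..

lemma szlenkIter_limit (ε : ℝ) (K : Set (StrongDual ℝ X)) {α : Ordinal} (h : Order.IsSuccLimit α) :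
    szlenkIter ε K α = ⋂ (β : Ordinal) (_ : β < α), szlenkIter ε K β :=
  Ordinal.limitRecOn_limit _ _ _ _ h

lemma szlenkIter_subset (ε : ℝ) (K : Set (StrongDual ℝ X)) (α : Ordinal) :
    szlenkIter ε K α ⊆ K := by
  induction α using Ordinal.limitRecOn with
  | zero => rw [szlenkIter_zero]
  | add_one α ih => rw [← Order.succ_eq_add_one, szlenkIter_succ]; exact fun x hx => ih hx.1
  | limit α h ih =>
    rw [szlenkIter_limit ε K h]
    exact fun x hx => ih 0 h.bot_lt (Set.mem_iInter₂.1 hx 0 h.bot_lt)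

open Bornology in
lemma image_szlenkIter_subset (R : StrongDual ℝ X → StrongDual ℝ Y) (hiso : Isometry R)
    (hcont : ∀ V : Set (StrongDual ℝ Y), IsWeakStarOpen V → IsWeakStarOpen (R ⁻¹' V))
    {K : Set (StrongDual ℝ X)} (hK : IsBounded K) (ε : ℝ) (α : Ordinal) :
    R '' szlenkIter ε K α ⊆ szlenkIter ε (R '' K) α := by
  induction α using Ordinal.limitRecOn with
  | zero => rw [szlenkIter_zero, szlenkIter_zero]
  | add_one α ih =>
    rw [← Order.succ_eq_add_one, szlenkIter_succ, szlenkIter_succ]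
    rintro _ ⟨x, hx, rfl⟩
    refine ⟨ih ⟨x, hx.1, rfl⟩, fun V hV hxV => ?_⟩
    have h1 : ε < diam (szlenkIter ε K α ∩ R ⁻¹' V) := hx.2 _ (hcont V hV) hxV
    have h2 : R '' (szlenkIter ε K α ∩ R ⁻¹' V) ⊆ szlenkIter ε (R '' K) α ∩ V := by
      rintro _ ⟨z, ⟨hz1, hz2⟩, rfl⟩
      exact ⟨ih ⟨z, hz1, rfl⟩, hz2⟩
    have hb : IsBounded (szlenkIter ε (R '' K) α ∩ V) :=
      ((hiso.lipschitz.isBounded_image hK).subset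
        (Set.inter_subset_left.trans (szlenkIter_subset ..)))
    calc ε < diam (szlenkIter ε K α ∩ R ⁻¹' V) := h1
      _ = diam (R '' (szlenkIter ε K α ∩ R ⁻¹' V)) := (hiso.diam_image _).symm
      _ ≤ diam (szlenkIter ε (R '' K) α ∩ V) := diam_mono h2 hb
  | limit α hα ih =>
    rw [szlenkIter_limit _ _ hα, szlenkIter_limit _ _ hα]
    rintro _ ⟨x, hx, rfl⟩
    exact Set.mem_iInter₂.2 fun β hβ => ih β hβ ⟨x, Set.mem_iInter₂.1 hx β hβ, rfl⟩

open Bornology in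
lemma szLE_of_image (R : StrongDual ℝ X → StrongDual ℝ Y) (hiso : Isometry R)
    (hcont : ∀ V : Set (StrongDual ℝ Y), IsWeakStarOpen V → IsWeakStarOpen (R ⁻¹' V))
    {K : Set (StrongDual ℝ X)} (hK : IsBounded K) {γ : Ordinal}
    (h : ∀ ε : ℝ, 0 < ε → szlenkIter ε (R '' K) γ = ∅) :
    ∀ ε : ℝ, 0 < ε → szlenkIter ε K γ = ∅ := by
  intro ε hε
  have := image_szlenkIter_subset R hiso hcont hK ε γ
  rw [h ε hε, Set.subset_empty_iff, Set.image_eq_empty] at this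
  exact this

lemma isWeakStarOpen_preimage_comp {Z : Type*} [NormedAddCommGroup Z] [NormedSpace ℝ Z]
    (Q : Z →L[ℝ] X) (V : Set (StrongDual ℝ Z)) (hV : IsWeakStarOpen V) :
    IsWeakStarOpen ((fun f : StrongDual ℝ X => f.comp Q) ⁻¹' V) := by
  set m : WeakDual ℝ X → WeakDual ℝ Z :=
    fun g => StrongDual.toWeakDual ((StrongDual.toWeakDual.symm g).comp Q) with hm
  have hmc : Continuous m := by
    apply WeakDual.continuous_of_continuous_eval
    intro z
    exact WeakDual.eval_continuous (Q z)
  have key : (StrongDual.toWeakDual '' ((fun f : StrongDual ℝ X => f.comp Q) ⁻¹' V) : Set (WeakDual ℝ X))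
      = m ⁻¹' (StrongDual.toWeakDual '' V : Set (WeakDual ℝ Z)) := by
    rw [LinearEquiv.image_eq_preimage_symm, LinearEquiv.image_eq_preimage_symm]
    ext g
    simp only [hm, Set.mem_preimage, LinearEquiv.symm_apply_apply]
  rw [IsWeakStarOpen, key]
  exact hV.preimage hmc

end Aux

section lpFacts

/-- Evaluation functional on `ℓ∞`. -/
def evalCLM (ι : Type*) (i : ι) : lp (fun _ : ι => ℝ) ⊤ →L[ℝ] ℝ :=
  LinearMap.mkContinuous
    { toFun := fun a => a i
      map_add' := fun a b => by simp only [lp.coeFn_add, Pi.add_apply]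
      map_smul' := fun c a => by simp only [lp.coeFn_smul, Pi.smul_apply, RingHom.id_apply, smul_eq_mul] }
    1 (fun a => by rw [one_mul]; exact lp.norm_apply_le_norm ENNReal.top_ne_zero a i)

lemma norm_evalCLM_le (ι : Type*) (i : ι) : ‖evalCLM ι i‖ ≤ 1 :=
  LinearMap.mkContinuous_norm_le _ zero_le_one _

lemma evalCLM_apply (ι : Type*) (i : ι) (a : lp (fun _ : ι => ℝ) ⊤) :
    evalCLM ι i a = a i := rfl

variable {F : Type*} [NormedAddCommGroup F] [NormedSpace ℝ F]

/-- `J* B_{ℓ∞*} = B_{F*}` for the canonical embedding. -/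
lemma image_comp_J (J : F →L[ℝ] lp (fun _ : (closedBall (0 : StrongDual ℝ F) 1) => ℝ) ⊤)
    (hJ : ∀ (y : F) (y' : (closedBall (0 : StrongDual ℝ F) 1)),
      (J y : ∀ _ : (closedBall (0 : StrongDual ℝ F) 1), ℝ) y' = (y' : StrongDual ℝ F) y) :
    (fun g : StrongDual ℝ (lp (fun _ : (closedBall (0 : StrongDual ℝ F) 1) => ℝ) ⊤) => g.comp J) ''
      closedBall 0 1 = closedBall (0 : StrongDual ℝ F) 1 := by
  have hJle : ‖J‖ ≤ 1 := by
    refine ContinuousLinearMap.opNorm_le_bound J zero_le_one fun y => ?_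
    rw [one_mul]
    refine lp.norm_le_of_forall_le (norm_nonneg y) fun i => ?_
    rw [hJ]
    calc ‖(i : StrongDual ℝ F) y‖ ≤ ‖(i : StrongDual ℝ F)‖ * ‖y‖ := (i : StrongDual ℝ F).le_opNorm y
      _ ≤ 1 * ‖y‖ := by
          have := i.2
          rw [mem_closedBall_zero_iff] at this
          exact mul_le_mul_of_nonneg_right this (norm_nonneg y)
      _ = ‖y‖ := one_mul _
  apply Set.Subset.antisymm
  · rintro _ ⟨g, hg, rfl⟩
    rw [mem_closedBall_zero_iff] at hg ⊢
    calc ‖g.comp J‖ ≤ ‖g‖ * ‖J‖ := ContinuousLinearMap.opNorm_comp_le g J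
      _ ≤ 1 * 1 := mul_le_mul hg hJle (norm_nonneg J) zero_le_one
      _ = 1 := one_mul 1
  · intro f hf
    refine ⟨evalCLM _ ⟨f, hf⟩, ?_, ?_⟩
    · rw [mem_closedBall_zero_iff]
      exact norm_evalCLM_le _ _
    · ext y
      rw [ContinuousLinearMap.comp_apply, evalCLM_apply, hJ]

end lpFacts

section l1Facts
variable {E : Type*} [NormedAddCommGroup E] [NormedSpace ℝ E]

lemma l1_summable_norm (a : lp (fun _ : (closedBall (0 : E) 1) => ℝ) 1) :
    Summable fun x : (closedBall (0 : E) 1) => ‖(a : ∀ _ : (closedBall (0 : E) 1), ℝ) x‖ := by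
  have h := (lp.memℓp a).summable (by norm_num : 0 < (1 : ENNReal).toReal)
  simpa using h

lemma l1_norm_eq (a : lp (fun _ : (closedBall (0 : E) 1) => ℝ) 1) :
    ‖a‖ = ∑' x : (closedBall (0 : E) 1), ‖(a : ∀ _ : (closedBall (0 : E) 1), ℝ) x‖ := by
  have h := lp.norm_eq_tsum_rpow (by norm_num : 0 < (1 : ENNReal).toReal) a
  simpa using h

lemma norm_Q_le_one (Q : lp (fun _ : (closedBall (0 : E) 1) => ℝ) 1 →L[ℝ] E)
    (hQ : ∀ a : lp (fun _ : (closedBall (0 : E) 1) => ℝ) 1,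
      Q a = ∑' x : (closedBall (0 : E) 1), (a : ∀ _ : (closedBall (0 : E) 1), ℝ) x • (x : E)) :
    ‖Q‖ ≤ 1 := by
  refine ContinuousLinearMap.opNorm_le_bound Q zero_le_one fun a => ?_
  rw [one_mul, hQ a, l1_norm_eq a]
  have hsum : Summable fun x : (closedBall (0 : E) 1) =>
      ‖(a : ∀ _ : (closedBall (0 : E) 1), ℝ) x • (x : E)‖ := by
    refine Summable.of_nonneg_of_le (fun x => norm_nonneg _) (fun x => ?_) (l1_summable_norm a)
    rw [norm_smul]
    have hx : ‖(x : E)‖ ≤ 1 := mem_closedBall_zero_iff.1 x.2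
    calc ‖(a : ∀ _ : (closedBall (0 : E) 1), ℝ) x‖ * ‖(x : E)‖
        ≤ ‖(a : ∀ _ : (closedBall (0 : E) 1), ℝ) x‖ * 1 :=
          mul_le_mul_of_nonneg_left hx (norm_nonneg _)
      _ = _ := mul_one _
  calc ‖∑' x : (closedBall (0 : E) 1), (a : ∀ _ : (closedBall (0 : E) 1), ℝ) x • (x : E)‖
      ≤ ∑' x : (closedBall (0 : E) 1), ‖(a : ∀ _ : (closedBall (0 : E) 1), ℝ) x • (x : E)‖ :=
        norm_tsum_le_tsum_norm hsum
    _ ≤ ∑' x : (closedBall (0 : E) 1), ‖(a : ∀ _ : (closedBall (0 : E) 1), ℝ) x‖ := by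
        refine Summable.tsum_le_tsum (fun x => ?_) hsum (l1_summable_norm a)
        rw [norm_smul]
        have hx : ‖(x : E)‖ ≤ 1 := mem_closedBall_zero_iff.1 x.2
        calc ‖(a : ∀ _ : (closedBall (0 : E) 1), ℝ) x‖ * ‖(x : E)‖
            ≤ ‖(a : ∀ _ : (closedBall (0 : E) 1), ℝ) x‖ * 1 :=
              mul_le_mul_of_nonneg_left hx (norm_nonneg _)
          _ = _ := mul_one _

lemma norm_comp_Q (Q : lp (fun _ : (closedBall (0 : E) 1) => ℝ) 1 →L[ℝ] E)
    (hQ : ∀ a : lp (fun _ : (closedBall (0 : E) 1) => ℝ) 1,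
      Q a = ∑' x : (closedBall (0 : E) 1), (a : ∀ _ : (closedBall (0 : E) 1), ℝ) x • (x : E))
    (f : StrongDual ℝ E) : ‖f.comp Q‖ = ‖f‖ := by
  refine le_antisymm ?_ ?_
  · calc ‖f.comp Q‖ ≤ ‖f‖ * ‖Q‖ := ContinuousLinearMap.opNorm_comp_le f Q
      _ ≤ ‖f‖ * 1 := mul_le_mul_of_nonneg_left (norm_Q_le_one Q hQ) (norm_nonneg f)
      _ = ‖f‖ := mul_one _
  · refine ContinuousLinearMap.opNorm_le_bound f (norm_nonneg _) fun x => ?_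
    classical
    rcases eq_or_ne x 0 with rfl | hx
    · simp
    · have hxn : (0 : ℝ) < ‖x‖ := norm_pos_iff.2 hx
      have hmem : ‖x‖⁻¹ • x ∈ closedBall (0 : E) 1 := by
        rw [mem_closedBall_zero_iff, norm_smul, norm_inv, norm_norm,
          inv_mul_cancel₀ hxn.ne']
      set i : (closedBall (0 : E) 1) := ⟨‖x‖⁻¹ • x, hmem⟩ with hi
      set a : lp (fun _ : (closedBall (0 : E) 1) => ℝ) 1 := lp.single 1 i ‖x‖ with ha
      have haQ : Q a = x := by
        rw [hQ a]
        have ht : ∑' y : (closedBall (0 : E) 1),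
            (a : ∀ _ : (closedBall (0 : E) 1), ℝ) y • (y : E)
            = (a : ∀ _ : (closedBall (0 : E) 1), ℝ) i • (i : E) := by
          refine tsum_eq_single i fun j hj => ?_
          rw [ha, lp.single_apply_ne _ _ _ hj, zero_smul]
        rw [ht, ha, lp.single_apply_self, hi, smul_smul, mul_inv_cancel₀ hxn.ne', one_smul]
      have hna : ‖a‖ = ‖x‖ := by
        have := lp.norm_single (by norm_num : (0 : ENNReal) < 1)
          (E := fun _ : (closedBall (0 : E) 1) => ℝ) i ‖x‖
        rw [ha]
        rw [this, norm_norm]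
      calc ‖f x‖ = ‖(f.comp Q) a‖ := by rw [ContinuousLinearMap.comp_apply, haQ]
        _ ≤ ‖f.comp Q‖ * ‖a‖ := (f.comp Q).le_opNorm a
        _ = ‖f.comp Q‖ * ‖x‖ := by rw [hna]

end l1Facts

/-- Injectivity and surjectivity of the Szlenk-index classes: with `𝔍_F : F → ℓ∞(B_{F*})`
the canonical embedding and `𝔔_E : ℓ1(B_E) → E` the canonical surjection, for every
ordinal `γ`: `Sz(𝔍_F ∘ T) ≤ γ ↔ Sz(T) ≤ γ`, and `Sz(T ∘ 𝔔_E) ≤ γ → Sz(T) ≤ γ`. -/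
theorem szOpLE_canonical_embedding_and_surjection
    {E F : Type*} [NormedAddCommGroup E] [NormedSpace ℝ E] [CompleteSpace E]
    [NormedAddCommGroup F] [NormedSpace ℝ F] [CompleteSpace F]
    (T : E →L[ℝ] F)
    (J : F →L[ℝ] lp (fun _ : (closedBall (0 : StrongDual ℝ F) 1) => ℝ) ⊤)
    (hJ : ∀ (y : F) (y' : (closedBall (0 : StrongDual ℝ F) 1)), (J y : ∀ _ : (closedBall (0 : StrongDual ℝ F) 1), ℝ) y' = (y' : StrongDual ℝ F) y)
    (Q : lp (fun _ : (closedBall (0 : E) 1) => ℝ) 1 →L[ℝ] E)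
    (hQ : ∀ a : lp (fun _ : (closedBall (0 : E) 1) => ℝ) 1,
      Q a = ∑' x : (closedBall (0 : E) 1), (a : ∀ _ : (closedBall (0 : E) 1), ℝ) x • (x : E))
    (γ : Ordinal) :
    (SzOpLE (J.comp T) γ ↔ SzOpLE T γ) ∧ (SzOpLE (T.comp Q) γ → SzOpLE T γ) := by
  have hK : Bornology.IsBounded (adjImage T (closedBall (0 : StrongDual ℝ F) 1)) := by
    refine (Metric.isBounded_closedBall (x := (0 : StrongDual ℝ E)) (r := ‖T‖)).subset ?_
    rintro _ ⟨g, hg, rfl⟩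
    rw [mem_closedBall_zero_iff] at hg ⊢
    calc ‖g.comp T‖ ≤ ‖g‖ * ‖T‖ := ContinuousLinearMap.opNorm_comp_le g T
      _ ≤ 1 * ‖T‖ := mul_le_mul_of_nonneg_right hg (norm_nonneg T)
      _ = ‖T‖ := one_mul _
  constructor
  · have hset : adjImage (J.comp T) (closedBall 0 1)
        = adjImage T (closedBall (0 : StrongDual ℝ F) 1) := by
      unfold adjImage
      calc (fun g : StrongDual ℝ (lp (fun _ : (closedBall (0 : StrongDual ℝ F) 1) => ℝ) ⊤) =>
              g.comp (J.comp T)) '' closedBall 0 1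
          = (fun f : StrongDual ℝ F => f.comp T) ''
              ((fun g : StrongDual ℝ (lp (fun _ : (closedBall (0 : StrongDual ℝ F) 1) => ℝ) ⊤) =>
                g.comp J) '' closedBall 0 1) := by rw [Set.image_image]; rfl
        _ = (fun g : StrongDual ℝ F => g.comp T) '' closedBall (0 : StrongDual ℝ F) 1 := by
              rw [image_comp_J J hJ]
    unfold SzOpLE
    rw [hset]
  · intro h
    have hiso : Isometry (fun f : StrongDual ℝ E => f.comp Q) :=
      Isometry.of_dist_eq fun a b => by
        rw [dist_eq_norm, dist_eq_norm, ← ContinuousLinearMap.sub_comp, norm_comp_Q Q hQ]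
    have hset : adjImage (T.comp Q) (closedBall (0 : StrongDual ℝ F) 1)
        = (fun f : StrongDual ℝ E => f.comp Q) '' adjImage T (closedBall (0 : StrongDual ℝ F) 1) := by
      unfold adjImage
      rw [Set.image_image]
      rfl
    unfold SzOpLE SzLE at h ⊢
    rw [hset] at h
    exact szLE_of_image _ hiso (isWeakStarOpen_preimage_comp Q) hK h
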